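/- Let I = (x^a, y^b, z^c) ⊆ R = K[x,y,z] with a, b, c positive integers and K an infinite field. If floor((a+b+c)/2) < max{a,b,c}, then R/I has the weak Lefschetz property regardless of the characteristic of K. -/

import Mathlib

/-!
Take `ℓ = x_k` for the variable with the largest exponent; the hypothesis says
`e_k > ∑_{i ≠ k} (e_i - 1)`. Since `I` is a monomial ideal, multiplication by `x_k` can be read
off monomials. In degrees `d < e_k - 1` it is injective: if `x_k · x^m ∈ I`, the exponent that
reaches its bound cannot be the `k`-th one, so already `x^m ∈ I`. From degree `d ≥ e_k - 1` on it
is surjective: a monomial of degree `d + 1 ≥ e_k` outside `I` has its other exponents summing to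
at most `∑_{i ≠ k} (e_i - 1) < e_k`, so it is divisible by `x_k`.
-/

open MvPolynomial

noncomputable def comp (K : Type*) [Field K] {n : ℕ} (I : Ideal (MvPolynomial (Fin n) K)) (j : ℤ) :
    Submodule K (MvPolynomial (Fin n) K ⧸ I) :=
  if 0 ≤ j then
    (MvPolynomial.homogeneousSubmodule (Fin n) K j.toNat).map
      (Ideal.Quotient.mkₐ K I).toLinearMap
  else ⊥

noncomputable def hilb (K : Type*) [Field K] {n : ℕ} (I : Ideal (MvPolynomial (Fin n) K)) (j : ℤ) : ℕ :=
  Module.finrank K (comp K I j)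

def WLP (K : Type*) [Field K] {n : ℕ} (I : Ideal (MvPolynomial (Fin n) K)) : Prop :=
  ∃ ℓ : MvPolynomial (Fin n) K, ℓ.IsHomogeneous 1 ∧ ∀ j : ℤ,
    (∀ x ∈ comp K I j, Ideal.Quotient.mk I ℓ * x = 0 → x = 0) ∨
    (comp K I (j + 1) ≤ (comp K I j).map (LinearMap.mulLeft K (Ideal.Quotient.mk I ℓ)))

/-- The monomial complete intersection `(xᵃ, yᵇ, zᶜ) ⊆ K[x,y,z]`. -/
noncomputable def ciIdeal (K : Type*) [Field K] (a b c : ℕ) :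
    Ideal (MvPolynomial (Fin 3) K) :=
  Ideal.span {X 0 ^ a, X 1 ^ b, X 2 ^ c}

open Finset

section MonomialCompleteIntersection

variable {σ R : Type*} [CommSemiring R]

variable (R) in
noncomputable def monomialCompleteIntersection (e : σ → ℕ) : Ideal (MvPolynomial σ R) :=
  Ideal.span (Set.range fun i => X i ^ e i)

variable {e : σ → ℕ}

theorem mem_monomialCompleteIntersection {f : MvPolynomial σ R} :
    f ∈ monomialCompleteIntersection R e ↔ ∀ m ∈ f.support, ∃ i, e i ≤ m i := by
  have hgen : (Set.range fun i => (X i ^ e i : MvPolynomial σ R)) =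
      (fun s => monomial s 1) '' Set.range fun i => Finsupp.single i (e i) := by
    simp only [← Set.range_comp, Function.comp_def, X_pow_eq_monomial]
  rw [monomialCompleteIntersection, hgen, mem_ideal_span_monomial_image]
  simp only [Set.exists_range_iff, Finsupp.single_le_iff]

theorem monomial_mem_monomialCompleteIntersection {m : σ →₀ ℕ} {i : σ} (hi : e i ≤ m i) (c : R) :
    monomial m c ∈ monomialCompleteIntersection R e :=
  mem_monomialCompleteIntersection.2 fun _ hm' =>
    ⟨i, Finset.mem_singleton.1 (support_monomial_subset hm') ▸ hi⟩

theorem mem_monomialCompleteIntersection_of_X_mul_mem {f : MvPolynomial σ R} {d : ℕ} {k : σ}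
    (hf : f.IsHomogeneous d) (hd : d + 1 < e k)
    (h : X k * f ∈ monomialCompleteIntersection R e) :
    f ∈ monomialCompleteIntersection R e := by
  classical
  refine mem_monomialCompleteIntersection.2 fun m hm => ?_
  have hmk : m k ≤ d := (hf.degree_eq_sum_deg_support hm).symm ▸ Finsupp.le_degree k m
  obtain ⟨i, hi⟩ := mem_monomialCompleteIntersection.1 h (Finsupp.single k 1 + m)
    (by rw [support_X_mul]; exact Finset.mem_map_of_mem _ hm)
  obtain rfl | hik := eq_or_ne i k
  · simp only [Finsupp.add_apply, Finsupp.single_eq_same] at hi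
    omega
  · exact ⟨i, by simpa [Finsupp.single_apply, hik.symm] using hi⟩

theorem pos_of_sum_erase_lt [Fintype σ] [DecidableEq σ] {k : σ}
    (hk : ∑ i ∈ univ.erase k, (e i - 1) < e k) {m : σ →₀ ℕ} (hm : e k ≤ m.degree)
    (hlt : ∀ i ≠ k, m i < e i) : 0 < m k := by
  have hrest : ∑ i ∈ univ.erase k, m i ≤ ∑ i ∈ univ.erase k, (e i - 1) :=
    sum_le_sum fun i hi => Nat.le_sub_one_of_lt (hlt i (ne_of_mem_erase hi))
  rw [Finsupp.degree_eq_sum, ← add_sum_erase _ _ (mem_univ k)] at hm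
  omega

end MonomialCompleteIntersection

section WeakLefschetz

variable {K : Type*} [Field K] {n : ℕ}

theorem comp_natCast (I : Ideal (MvPolynomial (Fin n) K)) (d : ℕ) :
    comp K I d = (homogeneousSubmodule (Fin n) K d).map (Ideal.Quotient.mkₐ K I).toLinearMap := by
  simp [comp]

theorem comp_of_neg (I : Ideal (MvPolynomial (Fin n) K)) {j : ℤ} (hj : j < 0) : comp K I j = ⊥ :=
  if_neg (by omega)

variable {e : Fin n → ℕ} {k : Fin n} {d : ℕ}

theorem mul_X_injOn_comp (hd : d + 1 < e k) :
    ∀ x ∈ comp K (monomialCompleteIntersection K e) d, Ideal.Quotient.mk _ (X k) * x = 0 → x = 0 := by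
  rw [comp_natCast]
  rintro _ ⟨f, hf, rfl⟩ hfx
  simp only [AlgHom.toLinearMap_apply, Ideal.Quotient.mkₐ_eq_mk, ← map_mul,
    Ideal.Quotient.eq_zero_iff_mem] at hfx ⊢
  exact mem_monomialCompleteIntersection_of_X_mul_mem hf hd hfx

theorem mk_monomial_mem_map_mul_X (hk : ∑ i ∈ univ.erase k, (e i - 1) < e k) (hd : e k ≤ d + 1)
    {m : Fin n →₀ ℕ} (hm : m.degree = d + 1) (c : K) :
    Ideal.Quotient.mk _ (monomial m c) ∈ (comp K (monomialCompleteIntersection K e) d).map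
      (LinearMap.mulLeft K (Ideal.Quotient.mk _ (X k))) := by
  by_cases hmem : ∃ i, e i ≤ m i
  · obtain ⟨i, hi⟩ := hmem
    rw [Ideal.Quotient.eq_zero_iff_mem.2 (monomial_mem_monomialCompleteIntersection hi c)]
    exact zero_mem _
  simp only [not_exists, not_le] at hmem
  have hmk := pos_of_sum_erase_lt hk (hm ▸ hd) fun i _ => hmem i
  obtain ⟨m', rfl⟩ : ∃ m', m = Finsupp.single k 1 + m' :=
    ⟨m - Finsupp.single k 1, (add_tsub_cancel_of_le (Finsupp.single_le_iff.2 hmk)).symm⟩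
  refine ⟨Ideal.Quotient.mk _ (monomial m' c), ?_, ?_⟩
  · rw [comp_natCast]
    refine ⟨_, isHomogeneous_monomial c ?_, rfl⟩
    rw [map_add, Finsupp.degree_single] at hm
    omega
  · simp [monomial_single_add]

theorem comp_succ_le_map_mul_X (hk : ∑ i ∈ univ.erase k, (e i - 1) < e k) (hd : e k ≤ d + 1) :
    comp K (monomialCompleteIntersection K e) (d + 1 : ℕ) ≤
      (comp K (monomialCompleteIntersection K e) d).map
        (LinearMap.mulLeft K (Ideal.Quotient.mk _ (X k))) := by
  rw [comp_natCast]
  rintro _ ⟨g, hg, rfl⟩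
  rw [← g.support_sum_monomial_coeff, map_sum]
  exact sum_mem fun m hm => mk_monomial_mem_map_mul_X hk hd
    (hg.degree_eq_sum_deg_support hm).symm _

theorem wlp_monomialCompleteIntersection (k : Fin n) (hk : ∑ i ∈ univ.erase k, (e i - 1) < e k) :
    WLP K (monomialCompleteIntersection K e) := by
  refine ⟨X k, isHomogeneous_X _ _, fun j => ?_⟩
  rcases lt_or_ge j 0 with hj | hj
  · left
    simp [comp_of_neg _ hj]
  lift j to ℕ using hj
  rcases lt_or_ge (j + 1) (e k) with hd | hd
  · exact .inl (mul_X_injOn_comp hd)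
  · exact .inr (mod_cast comp_succ_le_map_mul_X hk hd)

end WeakLefschetz

theorem ciIdeal_eq_monomialCompleteIntersection (K : Type*) [Field K] (a b c : ℕ) :
    ciIdeal K a b c = monomialCompleteIntersection K ![a, b, c] := by
  rw [ciIdeal, monomialCompleteIntersection]
  congr 1
  ext
  simp [Fin.exists_fin_succ, eq_comm]

theorem exists_sum_erase_lt_of_half_lt_max {a b c : ℕ} (h : (a + b + c) / 2 < max a (max b c)) :
    ∃ k : Fin 3, ∑ i ∈ univ.erase k, (![a, b, c] i - 1) < ![a, b, c] k := by
  have hsum (k : Fin 3) : ∑ i ∈ univ.erase k, (![a, b, c] i - 1) + (![a, b, c] k - 1) =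
      (a - 1) + (b - 1) + (c - 1) := by
    rw [sum_erase_add _ _ (mem_univ k), Fin.sum_univ_three]
    rfl
  have h0 := hsum 0
  have h1 := hsum 1
  have h2 := hsum 2
  simp only [Fin.exists_fin_succ, Fin.isValue, Matrix.cons_val_zero, Matrix.cons_val_one,
    Matrix.cons_val_succ, Fin.succ_zero_eq_one, Fin.succ_one_eq_two, Matrix.cons_val_two,
    Matrix.tail_cons, Matrix.head_cons, IsEmpty.exists_iff, or_false] at h0 h1 h2 ⊢
  omega

theorem stmt14_general {K : Type*} [Field K] (a b c : ℕ)
    (h : (a + b + c) / 2 < max a (max b c)) :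
    WLP K (ciIdeal K a b c) := by
  obtain ⟨k, hk⟩ := exists_sum_erase_lt_of_half_lt_max h
  rw [ciIdeal_eq_monomialCompleteIntersection]
  exact wlp_monomialCompleteIntersection k hk

/-- **Theorem (type-one (i)).** Let `I = (xᵃ, yᵇ, zᶜ)` with `a, b, c` positive and `K` infinite.
If `⌊(a+b+c)/2⌋ < max{a,b,c}`, then `R/I` has the weak Lefschetz property regardless of the
characteristic of `K`. -/
theorem stmt14 {K : Type*} [Field K] [Infinite K] (a b c : ℕ)
    (ha : 0 < a) (hb : 0 < b) (hc : 0 < c)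
    (h : (a + b + c) / 2 < max a (max b c)) :
    WLP K (ciIdeal K a b c) :=
  stmt14_general a b c h
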